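/- arXiv:2101.03081 — 3 statements merged into one kernel-verified Lean document; each statement's English description precedes it below -/
import Mathlib

section
/- Let B be a finite nonempty basis with the strong exchange property (SEP) of degree d in n variables. If α ∈ B satisfies α(i) > min_B(i) and α(j) < max_B(j) for indices i and j, then the exponent vector γ with γ + e_i = α + e_j (i.e. γ = α − e_i + e_j) also belongs to B. -/
/-- The `i`-th standard unit exponent vector. -/
def eVec {n : ℕ} (i : Fin n) : Fin n → ℕ := fun j => if j = i then 1 else 0

/-- A finite nonempty set `B` of exponent vectors is a basis with the strong exchange
property (SEP) of degree `d`. -/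
def IsSEP {n : ℕ} (B : Finset (Fin n → ℕ)) (d : ℕ) : Prop :=
  B.Nonempty ∧ (∀ α ∈ B, ∑ i, α i = d) ∧
    ∀ α ∈ B, ∀ β ∈ B, ∀ i j : Fin n, β i < α i → α j < β j →
      ∃ γ ∈ B, γ + eVec i = α + eVec j

/-!
Pick `δ ∈ B` attaining `min_B(i)` and `β ∈ B` with `α j < β j`. If `β i < α i`, the exchange
property applied to `α, β` is the claim. Otherwise `δ i < β i`, so by equality of degrees
`β k < δ k` for some `k`, and exchanging `β` against `δ` gives `β − e_i + e_k ∈ B`, which still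
beats `α` at `j` but has a smaller `i`-th coordinate; induct on `β i`.
-/

theorem Finset.exists_lt_of_sum_eq_of_lt {ι M : Type*} [AddCommMonoid M] [LinearOrder M]
    [IsOrderedCancelAddMonoid M] {s : Finset ι} {f g : ι → M} (hfg : ∑ k ∈ s, f k = ∑ k ∈ s, g k)
    {i : ι} (hi : i ∈ s) (hgf : g i < f i) : ∃ k ∈ s, f k < g k := by
  by_contra! h
  exact (Finset.sum_lt_sum h ⟨i, hi, hgf⟩).ne hfg.symm

section eVec

variable {n : ℕ} {i k l : Fin n} {β γ : Fin n → ℕ}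

@[simp] theorem eVec_apply_self : eVec i i = 1 := if_pos rfl

@[simp] theorem eVec_apply_of_ne (h : l ≠ i) : eVec i l = 0 := if_neg h

theorem apply_lt_of_add_eVec_eq (h : γ + eVec i = β + eVec k) (hik : i ≠ k) : γ i < β i := by
  have := congrFun h i
  simp only [Pi.add_apply, eVec_apply_self, eVec_apply_of_ne hik] at this
  omega

theorem apply_le_of_add_eVec_eq (h : γ + eVec i = β + eVec k) (hli : l ≠ i) : β l ≤ γ l := by
  have := congrFun h l
  simp only [Pi.add_apply, eVec_apply_of_ne hli] at this
  omega

end eVec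

namespace IsSEP

variable {n d : ℕ} {B : Finset (Fin n → ℕ)} {i j : Fin n} {α β δ : Fin n → ℕ}

theorem exists_apply_lt_of_apply_lt (hB : IsSEP B d) (hβ : β ∈ B) (hδ : δ ∈ B)
    (hδβ : δ i < β i) : ∃ k, β k < δ k := by
  obtain ⟨k, -, hk⟩ := Finset.exists_lt_of_sum_eq_of_lt
    ((hB.2.1 β hβ).trans (hB.2.1 δ hδ).symm) (Finset.mem_univ i) hδβ
  exact ⟨k, hk⟩

theorem exists_mem_apply_lt_and_le (hB : IsSEP B d) (hβ : β ∈ B) (hδ : δ ∈ B)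
    (hδβ : δ i < β i) : ∃ γ ∈ B, γ i < β i ∧ ∀ l ≠ i, β l ≤ γ l := by
  obtain ⟨k, hk⟩ := hB.exists_apply_lt_of_apply_lt hβ hδ hδβ
  have hik : i ≠ k := by rintro rfl; exact (hk.trans hδβ).false
  obtain ⟨γ, hγ, hγβ⟩ := hB.2.2 β hβ δ hδ i k hδβ hk
  exact ⟨γ, hγ, apply_lt_of_add_eVec_eq hγβ hik, fun l hl => apply_le_of_add_eVec_eq hγβ hl⟩

theorem exists_exchange_of_lt_of_lt (hB : IsSEP B d) (hα : α ∈ B) (hδ : δ ∈ B)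
    (hδα : δ i < α i) (hβ : β ∈ B) (hαβ : α j < β j) :
    ∃ γ ∈ B, γ + eVec i = α + eVec j := by
  obtain rfl | hji := eq_or_ne j i
  · exact ⟨α, hα, rfl⟩
  induction hm : β i using Nat.strong_induction_on generalizing β with
  | _ m ih =>
    by_cases hβα : β i < α i
    · exact hB.2.2 α hα β hβ i j hβα hαβ
    obtain ⟨γ, hγ, hγβ, hβγ⟩ :=
      hB.exists_mem_apply_lt_and_le hβ hδ (hδα.trans_le (not_lt.mp hβα))
    exact ih (γ i) (hm ▸ hγβ) hγ (hαβ.trans_le (hβγ j hji)) rfl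

end IsSEP

/-- If `α ∈ B` with `α i > min_B(i)` and `α j < max_B(j)` then `α − e_i + e_j ∈ B`. -/
theorem sep_exchange_min_max {n d : ℕ} (B : Finset (Fin n → ℕ))
    (hB : IsSEP B d) (hne : B.Nonempty) {α : Fin n → ℕ} (hα : α ∈ B) {i j : Fin n}
    (hi : B.inf' hne (fun β => β i) < α i) (hj : α j < B.sup' hne (fun β => β j)) :
    ∃ γ ∈ B, γ + eVec i = α + eVec j := by
  obtain ⟨δ, hδ, hδi⟩ := Finset.exists_mem_eq_inf' hne (fun β => β i)
  obtain ⟨β, hβ, hβj⟩ := Finset.exists_mem_eq_sup' hne (fun β => β j)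
  exact hB.exists_exchange_of_lt_of_lt hα hδ (hδi ▸ hi) hβ (hβj ▸ hj)
end

section
/- Let B be a finite nonempty basis with the strong exchange property (SEP) of degree d in n variables, and let k be a positive integer. Then B^k = {b_1 + ⋯ + b_k : b_1, …, b_k ∈ B} is a basis with the strong exchange property of degree dk. -/
/-!
An SEP basis `B` of degree `d` is exactly the set of exponent vectors of degree `d` lying in the
box `[m, M]` spanned by its coordinatewise minimum and maximum: for `α` in that box, an element of
`B` closest to `α` could otherwise be moved one unit towards `α` by an exchange. Conversely every
nonempty such box slice has the SEP, because `α - e_i + e_j` lies coordinatewise between `α` and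
`β`. Finally, the `k`-fold sumset of the slice for `(m, M, d)` is the slice for `(k m, k M, d k)`:
a vector `α` of the latter splits as `b + (α - b)` with `b` of degree `d` chosen coordinatewise
between `max(m, α - (k - 1) M)` and `min(M, α - (k - 1) m)`.
-/

open Finset

theorem Nat.succ_mul_sub_mul_le {a y k : ℕ} (h : a ≤ (k + 1) * y) :
    (k + 1) * (a - k * y) ≤ a := by
  rcases le_total a (k * y) with ha | ha
  · simp [Nat.sub_eq_zero_of_le ha]
  · obtain ⟨c, rfl⟩ := Nat.exists_eq_add_of_le ha
    rw [Nat.add_sub_cancel_left]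
    nlinarith

theorem Nat.le_succ_mul_sub_mul {a x k : ℕ} (h : (k + 1) * x ≤ a) :
    a ≤ (k + 1) * (a - k * x) := by
  obtain ⟨c, rfl⟩ := Nat.exists_eq_add_of_le h
  have : (k + 1) * x + c - k * x = x + c := by rw [add_mul, one_mul]; omega
  rw [this]
  nlinarith

section BoxSlice

variable {ι : Type*} [Fintype ι]

theorem exists_lt_of_sum_eq_of_ne {f g : ι → ℕ} (h : ∑ i, f i = ∑ i, g i) (hne : f ≠ g) :
    ∃ i, f i < g i := by
  by_contra! hle
  exact hne (funext fun i =>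
    ((sum_eq_sum_iff_of_le fun i _ => hle i).1 h.symm i (mem_univ i)).symm)

theorem exists_mem_Icc_sum_eq {lo hi : ι → ℕ} (hle : lo ≤ hi) {t : ℕ}
    (hlo : ∑ i, lo i ≤ t) (hhi : t ≤ ∑ i, hi i) : ∃ b ∈ Set.Icc lo hi, ∑ i, b i = t := by
  classical
  induction t, hlo using Nat.le_induction with
  | base => exact ⟨lo, ⟨le_rfl, hle⟩, rfl⟩
  | succ t _ ih =>
    obtain ⟨b, ⟨hlob, hbhi⟩, hb⟩ := ih (by omega)
    obtain ⟨i, -, hi⟩ := exists_lt_of_sum_lt (s := univ) (f := b) (g := hi) (by omega)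
    refine ⟨b + Pi.single i 1, ⟨fun l => (hlob l).trans (Nat.le_add_right _ _), fun l => ?_⟩, ?_⟩
    · rcases eq_or_ne l i with rfl | hl
      · simpa using hi
      · simpa [hl] using hbhi l
    · simp [sum_add_distrib, hb]

def boxSlice (m M : ι → ℕ) (d : ℕ) : Set (ι → ℕ) := {α | α ∈ Set.Icc m M ∧ ∑ i, α i = d}

variable {m M : ι → ℕ} {d : ℕ}

theorem exists_peel_of_mem_boxSlice {k : ℕ} {α : ι → ℕ}
    (hα : α ∈ boxSlice ((k + 1) • m) ((k + 1) • M) (d * (k + 1))) :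
    ∃ b ∈ boxSlice m M d, b ≤ α ∧ α - b ∈ boxSlice (k • m) (k • M) (d * k) := by
  obtain ⟨⟨hmα, hαM⟩, hαd⟩ := hα
  set lo : ι → ℕ := m ⊔ (α - k • M)
  set hi : ι → ℕ := M ⊓ (α - k • m)
  have hcoord : ∀ i, lo i ≤ hi i ∧ (k + 1) * lo i ≤ α i ∧ α i ≤ (k + 1) * hi i := fun i => by
    have hmi : (k + 1) * m i ≤ α i := hmα i
    have hMi : α i ≤ (k + 1) * M i := hαM i
    have hmM : m i ≤ M i := Nat.le_of_mul_le_mul_left (hmi.trans hMi) k.succ_pos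
    have hkmM : k * m i ≤ k * M i := Nat.mul_le_mul_left k hmM
    simp only [lo, hi, Pi.sup_apply, Pi.inf_apply, Pi.sub_apply, Pi.smul_apply, smul_eq_mul]
    refine ⟨by rw [add_one_mul] at hmi hMi; omega, ?_, ?_⟩
    · rcases max_choice (m i) (α i - k * M i) with h | h <;> rw [h]
      exacts [hmi, Nat.succ_mul_sub_mul_le hMi]
    · rcases min_choice (M i) (α i - k * m i) with h | h <;> rw [h]
      exacts [hMi, Nat.le_succ_mul_sub_mul hmi]
  have hsum_lo : ∑ i, lo i ≤ d := by
    refine Nat.le_of_mul_le_mul_left ?_ k.succ_pos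
    calc (k + 1) * ∑ i, lo i = ∑ i, (k + 1) * lo i := mul_sum _ _ _
      _ ≤ ∑ i, α i := sum_le_sum fun i _ => (hcoord i).2.1
      _ = (k + 1) * d := by rw [hαd, mul_comm]
  have hsum_hi : d ≤ ∑ i, hi i := by
    refine Nat.le_of_mul_le_mul_left ?_ k.succ_pos
    calc (k + 1) * d = ∑ i, α i := by rw [hαd, mul_comm]
      _ ≤ ∑ i, (k + 1) * hi i := sum_le_sum fun i _ => (hcoord i).2.2
      _ = (k + 1) * ∑ i, hi i := (mul_sum _ _ _).symm
  obtain ⟨b, ⟨hlob, hbhi⟩, hbd⟩ :=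
    exists_mem_Icc_sum_eq (fun i => (hcoord i).1) hsum_lo hsum_hi
  have hbα : b ≤ α := fun i => by
    have := hbhi i
    simp only [hi, Pi.inf_apply, Pi.sub_apply] at this
    show b i ≤ α i
    omega
  refine ⟨b, ⟨⟨fun i => ?_, fun i => ?_⟩, hbd⟩, hbα, ⟨fun i => ?_, fun i => ?_⟩, ?_⟩
  · exact le_sup_left.trans (hlob i)
  · exact (hbhi i).trans inf_le_left
  · have := hbhi i
    simp only [hi, Pi.inf_apply, Pi.sub_apply, Pi.smul_apply, smul_eq_mul] at this
    have hmi : (k + 1) * m i ≤ α i := hmα i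
    show k * m i ≤ α i - b i
    rw [add_one_mul] at hmi
    omega
  · have := hlob i
    simp only [lo, Pi.sup_apply, Pi.sub_apply, Pi.smul_apply, smul_eq_mul] at this
    show α i - b i ≤ k * M i
    omega
  · simp only [Pi.sub_apply]
    rw [sum_tsub_distrib _ fun i _ => hbα i, hαd, hbd, mul_add_one, Nat.add_sub_cancel]

theorem sum_mem_boxSlice {k : ℕ} {b : Fin k → ι → ℕ} (hb : ∀ t, b t ∈ boxSlice m M d) :
    ∑ t, b t ∈ boxSlice (k • m) (k • M) (d * k) := by
  refine ⟨⟨fun i => ?_, fun i => ?_⟩, ?_⟩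
  · simpa [Finset.sum_apply] using sum_le_sum fun t (_ : t ∈ univ) => (hb t).1.1 i
  · simpa [Finset.sum_apply] using sum_le_sum fun t (_ : t ∈ univ) => (hb t).1.2 i
  · simp only [Finset.sum_apply]
    rw [sum_comm]
    simp [fun t => (hb t).2, mul_comm]

theorem exists_fin_sum_eq_iff_mem_boxSlice {k : ℕ} {α : ι → ℕ} :
    (∃ b : Fin k → ι → ℕ, (∀ t, b t ∈ boxSlice m M d) ∧ α = ∑ t, b t) ↔
      α ∈ boxSlice (k • m) (k • M) (d * k) := by
  refine ⟨fun ⟨b, hb, hα⟩ => hα ▸ sum_mem_boxSlice hb, fun hα => ?_⟩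
  induction k generalizing α with
  | zero =>
    refine ⟨Fin.elim0, fun t => t.elim0, funext fun i => ?_⟩
    simpa using (sum_eq_zero_iff.1 hα.2) i (mem_univ i)
  | succ k ih =>
    obtain ⟨b, hb, hbα, hrest⟩ := exists_peel_of_mem_boxSlice hα
    obtain ⟨c, hc, hαc⟩ := ih hrest
    refine ⟨Fin.cons b c, Fin.cases hb hc, ?_⟩
    rw [Fin.sum_univ_succ, Fin.cons_zero]
    simp only [Fin.cons_succ, ← hαc]
    exact (add_tsub_cancel_of_le hbα).symm

end BoxSlice

theorem eVec_apply {n : ℕ} (i j : Fin n) : eVec i j = if j = i then 1 else 0 := rfl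

theorem sum_eVec {n : ℕ} (i : Fin n) : ∑ l, eVec i l = 1 := by
  simp [eVec_apply]

section IsSEP

variable {n d : ℕ} {B : Finset (Fin n → ℕ)}

theorem IsSEP.exists_shift (hB : IsSEP B d) {β : Fin n → ℕ} (hβ : β ∈ B) {i j : Fin n}
    (hij : i ≠ j) (hi : ∃ w ∈ B, β i < w i) (hj : ∃ z ∈ B, z j < β j) :
    ∃ γ ∈ B, γ + eVec j = β + eVec i := by
  obtain ⟨z, hz, hzj⟩ := hj
  obtain ⟨w, hw, hwmin⟩ := (B.filter fun w => β i < w i).exists_min_image (· j)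
    (filter_nonempty_iff.2 hi)
  rw [mem_filter] at hw
  by_cases hwj : w j < β j
  · exact hB.2.2 β hβ w hw.1 j i hwj hw.2
  -- moving one unit of `w` away from `j` keeps `β i < w i` and contradicts the minimality of `w j`
  obtain ⟨l, hl⟩ := exists_lt_of_sum_eq_of_ne ((hB.2.1 w hw.1).trans (hB.2.1 z hz).symm)
    (by rintro rfl; omega)
  obtain ⟨w', hw', hw'e⟩ := hB.2.2 w hw.1 z hz j l (by omega) hl
  have hi' := congrFun hw'e i
  have hj' := congrFun hw'e j
  simp only [Pi.add_apply, eVec_apply] at hi' hj'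
  have hlj : l ≠ j := by rintro rfl; omega
  have := hwmin w' (mem_filter.2 ⟨hw', by split_ifs at hi' <;> omega⟩)
  split_ifs at hj' <;> omega

theorem IsSEP.mem_of_forall_exists_le (hB : IsSEP B d) {α : Fin n → ℕ} (hα : ∑ i, α i = d)
    (hlo : ∀ i, ∃ z ∈ B, z i ≤ α i) (hhi : ∀ i, ∃ w ∈ B, α i ≤ w i) : α ∈ B := by
  -- `β` minimises the deficit `∑ (α - β)⁺`, which an exchange towards `α` would lower
  obtain ⟨β, hβ, hmin⟩ := B.exists_min_image (fun β => ∑ l, (α l - β l)) hB.1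
  by_contra hαB
  have hne : β ≠ α := by rintro rfl; exact hαB hβ
  have hsum := (hB.2.1 β hβ).trans hα.symm
  obtain ⟨i, hi⟩ := exists_lt_of_sum_eq_of_ne hsum hne
  obtain ⟨j, hj⟩ := exists_lt_of_sum_eq_of_ne hsum.symm hne.symm
  have hij : i ≠ j := by rintro rfl; omega
  obtain ⟨w, hw, hwi⟩ := hhi i
  obtain ⟨z, hz, hzj⟩ := hlo j
  obtain ⟨γ, hγ, hγe⟩ := hB.exists_shift hβ hij ⟨w, hw, by omega⟩ ⟨z, hz, by omega⟩
  refine (hmin γ hγ).not_gt (sum_lt_sum (fun l _ => ?_) ⟨i, mem_univ i, ?_⟩)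
  · have h := congrFun hγe l
    simp only [Pi.add_apply, eVec_apply] at h
    split_ifs at h <;> subst_vars <;> omega
  · have h := congrFun hγe i
    simp only [Pi.add_apply, eVec_apply, if_pos, if_neg hij] at h
    omega

theorem IsSEP.mem_iff_mem_boxSlice (hB : IsSEP B d) {α : Fin n → ℕ} :
    α ∈ B ↔ α ∈ boxSlice (B.inf' hB.1 id) (B.sup' hB.1 id) d := by
  refine ⟨fun hα => ⟨⟨inf'_le id hα, le_sup' id hα⟩, hB.2.1 α hα⟩,
    fun ⟨⟨hmα, hαM⟩, hαd⟩ => hB.mem_of_forall_exists_le hαd (fun i => ?_) (fun i => ?_)⟩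
  · obtain ⟨z, hz, hzi⟩ := exists_mem_eq_inf' hB.1 (fun β => β i)
    refine ⟨z, hz, ?_⟩
    simpa [Finset.inf'_apply, ← hzi] using hmα i
  · obtain ⟨w, hw, hwi⟩ := exists_mem_eq_sup' hB.1 (fun β => β i)
    refine ⟨w, hw, ?_⟩
    simpa [Finset.sup'_apply, ← hwi] using hαM i

theorem isSEP_of_forall_mem_iff {m M : Fin n → ℕ} (hne : B.Nonempty)
    (hB : ∀ α, α ∈ B ↔ α ∈ boxSlice m M d) : IsSEP B d := by
  refine ⟨hne, fun α hα => ((hB α).1 hα).2, fun α hα β hβ i j hi hj => ?_⟩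
  rw [hB] at hα hβ
  have hij : i ≠ j := by rintro rfl; omega
  have hγ : α + eVec j - eVec i + eVec i = α + eVec j := tsub_add_cancel_of_le fun l => by
    simp only [Pi.add_apply, eVec_apply]
    split_ifs <;> subst_vars <;> omega
  refine ⟨α + eVec j - eVec i, (hB _).2 ⟨⟨fun l => ?_, fun l => ?_⟩, ?_⟩, hγ⟩
  · have : m l ≤ α l := hα.1.1 l
    have : m l ≤ β l := hβ.1.1 l
    simp only [Pi.sub_apply, Pi.add_apply, eVec_apply]
    split_ifs <;> subst_vars <;> omega
  · have : α l ≤ M l := hα.1.2 l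
    have : β l ≤ M l := hβ.1.2 l
    simp only [Pi.sub_apply, Pi.add_apply, eVec_apply]
    split_ifs <;> subst_vars <;> omega
  · have := congrArg (fun f => ∑ l, f l) hγ
    simp only [Pi.add_apply, sum_add_distrib, sum_eVec, hα.2] at this
    omega

end IsSEP

theorem sep_power_general {n d k : ℕ} (B : Finset (Fin n → ℕ))
    (hB : IsSEP B d) (Bk : Finset (Fin n → ℕ))
    (hBk : ∀ α : Fin n → ℕ,
      α ∈ Bk ↔ ∃ b : Fin k → (Fin n → ℕ), (∀ t, b t ∈ B) ∧ α = ∑ t, b t) :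
    IsSEP Bk (d * k) := by
  have hBk_box : ∀ α, α ∈ Bk ↔ α ∈ boxSlice (k • B.inf' hB.1 id) (k • B.sup' hB.1 id) (d * k) :=
    fun α => by
      simp only [hBk, hB.mem_iff_mem_boxSlice]
      exact exists_fin_sum_eq_iff_mem_boxSlice
  obtain ⟨β, hβ⟩ := hB.1
  exact isSEP_of_forall_mem_iff ⟨_, (hBk _).2 ⟨fun _ => β, fun _ => hβ, rfl⟩⟩ hBk_box

/-- If `B` has the SEP of degree `d`, then the `k`-fold sumset
`B^k = {b_1 + ⋯ + b_k : b_t ∈ B}` has the SEP of degree `d * k`. -/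
theorem sep_power {n d k : ℕ} (hk : 0 < k) (B : Finset (Fin n → ℕ))
    (hB : IsSEP B d) (Bk : Finset (Fin n → ℕ))
    (hBk : ∀ α : Fin n → ℕ,
      α ∈ Bk ↔ ∃ b : Fin k → (Fin n → ℕ), (∀ t, b t ∈ B) ∧ α = ∑ t, b t) :
    IsSEP Bk (d * k) :=
  sep_power_general B hB Bk hBk
end

section
/- In the tuple presentation of a product of SEP bases B_1, …, B_s over a field K, let F = y_{v_1}⋯y_{v_d} be a monomial in K[Y_V] and let F' = y_{v'_1}⋯y_{v'_d} be the monomial obtained from F by permuting the entries in one column: there is a column index c and a permutation σ of {1,…,d} with v'_i(c) = v_{σ(i)}(c) and v'_i(k) = v_i(k) for all k ≠ c. Then F − F' lies in E ∩ P. -/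
open MvPolynomial

/-- The total exponent vector `|v| = v 1 + ⋯ + v s` of a tuple `v ∈ V = B_1 × ⋯ × B_s`. -/
def tot {n : ℕ} {ι : Type*} [Fintype ι] (Bj : ι → Finset (Fin n → ℕ))
    (v : (j : ι) → ↥(Bj j)) : Fin n → ℕ :=
  ∑ j, ((v j : Fin n → ℕ))

/-- The tuple presentation `φ : K[Y_V] → K[x_1,…,x_n]`, `y_v ↦ x^{|v|}`. -/
noncomputable def phiT {n : ℕ} {ι : Type*} [Fintype ι] (Bj : ι → Finset (Fin n → ℕ))
    (K : Type*) [Field K] :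
    MvPolynomial ((j : ι) → ↥(Bj j)) K →ₐ[K] MvPolynomial (Fin n) K :=
  aeval fun v => ∏ i, (X i : MvPolynomial (Fin n) K) ^ tot Bj v i

/-- The ideal `L` generated by the degree-one binomials `y_v − y_w` with `|v| = |w|`. -/
noncomputable def idealL {n : ℕ} {ι : Type*} [Fintype ι] (Bj : ι → Finset (Fin n → ℕ))
    (K : Type*) [Field K] : Ideal (MvPolynomial ((j : ι) → ↥(Bj j)) K) :=
  Ideal.span { p | ∃ v w : (j : ι) → ↥(Bj j), tot Bj v = tot Bj w ∧ p = X v - X w }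

/-- The ideal `E` generated by the symmetric exchange relations. -/
noncomputable def idealE {n : ℕ} {ι : Type*} [Fintype ι] (Bj : ι → Finset (Fin n → ℕ))
    (K : Type*) [Field K] : Ideal (MvPolynomial ((j : ι) → ↥(Bj j)) K) :=
  Ideal.span { p | ∃ (r s t u : (j : ι) → ↥(Bj j)) (i₁ i₂ : Fin n),
    tot Bj s i₁ < tot Bj r i₁ ∧ tot Bj r i₂ < tot Bj s i₂ ∧
    tot Bj t + eVec i₁ = tot Bj r + eVec i₂ ∧
    tot Bj u + eVec i₂ = tot Bj s + eVec i₁ ∧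
    p = X r * X s - X t * X u }

/-- The ideal `P` generated by the binomials in `ker φ` whose associated matrices of
tuples differ in at most one column. -/
noncomputable def idealP {n : ℕ} {ι : Type*} [Fintype ι] (Bj : ι → Finset (Fin n → ℕ))
    (K : Type*) [Field K] : Ideal (MvPolynomial ((j : ι) → ↥(Bj j)) K) :=
  Ideal.span { p | ∃ d : ℕ, 1 ≤ d ∧ ∃ v w : Fin d → ((j : ι) → ↥(Bj j)),
    p = (∏ i, X (v i)) - (∏ i, X (w i)) ∧ p ∈ RingHom.ker (phiT Bj K) ∧
    ∃ c : ι, ∀ i : Fin d, ∀ k : ι, k ≠ c → v i k = w i k }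

/-!
Membership in `P` is immediate, since permuting a column does not change `∑ i, |v_i|`.
For `E`, a column permutation is a product of transpositions, so it suffices to swap the `c`-entries
`a`, `b` of two tuples `r`, `s`. Replacing `a` by `a + e_i - e_j` and `b` by `b - e_i + e_j`
(both in `B_c` by the strong exchange property, for `a_i < b_i`, `a_j > b_j`) moves `a` towards
`b` and changes the totals by a unit transfer `|r'| = |r| + e_i - e_j`, `|s'| = |s| - e_i + e_j`.
Every unit transfer lies in `E`: it is a symmetric exchange relation read in one direction or
the other, unless the signs of `|r| - |s|` at `i` and `j` forbid both; then both pairs are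
related by symmetric exchanges to a common third pair, which exists because the Minkowski sum
`B_1 + ⋯ + B_s` has the symmetric exchange property. The latter is the augmenting path argument:
the coordinates reachable from `j` in the exchange graph of two tuples contain one where the
first total is smaller, and a path using every column at most once realises the transfer.
-/

lemma eVec_self {n : ℕ} (i : Fin n) : eVec i i = 1 := if_pos rfl

lemma eVec_of_ne {n : ℕ} {i x : Fin n} (h : x ≠ i) : eVec i x = 0 := if_neg h

lemma apply_of_add_eVec_eq {n : ℕ} {γ α : Fin n → ℕ} {i j : Fin n} (hij : i ≠ j)
    (h : γ + eVec j = α + eVec i) :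
    γ i = α i + 1 ∧ γ j + 1 = α j ∧ ∀ x, x ≠ i → x ≠ j → γ x = α x := by
  have hx := congrFun h
  simp only [Pi.add_apply] at hx
  refine ⟨?_, ?_, fun x hxi hxj => ?_⟩
  · simpa only [eVec_self, eVec_of_ne hij, add_zero] using hx i
  · simpa only [eVec_self, eVec_of_ne hij.symm, add_zero] using hx j
  · simpa only [eVec_of_ne hxi, eVec_of_ne hxj, add_zero] using hx x

lemma sum_dist_lt_of_add_eVec_eq {n : ℕ} {ξ α b : Fin n → ℕ} {i j : Fin n}
    (h : ξ + eVec j = α + eVec i) (hi : α i < b i) (hj : b j < α j) :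
    ∑ x, Nat.dist (ξ x) (b x) < ∑ x, Nat.dist (α x) (b x) := by
  have hij : i ≠ j := by rintro rfl; omega
  obtain ⟨hξi, hξj, hξ⟩ := apply_of_add_eVec_eq hij h
  refine Finset.sum_lt_sum (fun x _ => ?_) ⟨i, Finset.mem_univ i, ?_⟩
  · unfold Nat.dist
    rcases eq_or_ne x i with rfl | hxi
    · omega
    rcases eq_or_ne x j with rfl | hxj
    · omega
    rw [hξ x hxi hxj]
  · unfold Nat.dist
    omega

namespace IsSEP

variable {n d : ℕ} {B : Finset (Fin n → ℕ)}

lemma exchange (hB : IsSEP B d) {α β : Fin n → ℕ} (hα : α ∈ B) (hβ : β ∈ B) {i j : Fin n}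
    (hi : β i < α i) (hj : α j < β j) : ∃ γ ∈ B, γ + eVec i = α + eVec j :=
  hB.2.2 α hα β hβ i j hi hj

lemma exists_lt_of_ne (hB : IsSEP B d) {α β : Fin n → ℕ} (hα : α ∈ B) (hβ : β ∈ B)
    (hne : α ≠ β) : ∃ i, α i < β i := by
  by_contra! h
  have hsum : ∑ i, β i = ∑ i, α i := (hB.2.1 β hβ).trans (hB.2.1 α hα).symm
  rw [Finset.sum_eq_sum_iff_of_le fun i _ => h i] at hsum
  exact hne (funext fun i => (hsum i (Finset.mem_univ i)).symm)

end IsSEP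

lemma Finset.sum_le_sum_of_sum_eq_of_closed {α : Type*} [Fintype α] [DecidableEq α]
    {f g : α → ℕ} (S : Finset α) (hfg : ∑ x, f x = ∑ x, g x)
    (hS : ∀ a ∈ S, g a < f a → ∀ b, f b < g b → b ∈ S) :
    ∑ x ∈ S, f x ≤ ∑ x ∈ S, g x := by
  by_cases h : ∀ a ∈ S, f a ≤ g a
  · exact Finset.sum_le_sum h
  · push Not at h
    obtain ⟨a, ha, hga⟩ := h
    have hc : ∑ x ∈ Sᶜ, g x ≤ ∑ x ∈ Sᶜ, f x :=
      Finset.sum_le_sum fun b hb =>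
        not_lt.1 fun hlt => Finset.mem_compl.1 hb (hS a ha hga b hlt)
    rw [← Finset.sum_add_sum_compl S f, ← Finset.sum_add_sum_compl S g] at hfg
    omega

section Tuples

variable {n : ℕ} {ι : Type*} [Fintype ι] [DecidableEq ι] {Bj : ι → Finset (Fin n → ℕ)}

lemma tot_update_add (p : (k : ι) → Bj k) (k : ι) (γ : Bj k) :
    tot Bj (Function.update p k γ) + p k = tot Bj p + γ := by
  have h (q : (k : ι) → Bj k) :
      tot Bj q = (q k : Fin n → ℕ) + ∑ k' ∈ Finset.univ.erase k, q k' :=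
    (Finset.add_sum_erase _ _ (Finset.mem_univ k)).symm
  rw [h, h p, Function.update_self,
    Finset.sum_congr rfl fun k' hk' => by rw [Function.update_of_ne (Finset.ne_of_mem_erase hk')]]
  abel

lemma tot_update_add_eVec {p : (k : ι) → Bj k} {k : ι} {γ : Bj k} {i j : Fin n}
    (h : (γ : Fin n → ℕ) + eVec j = p k + eVec i) :
    tot Bj (Function.update p k γ) + eVec j = tot Bj p + eVec i := by
  have hu := tot_update_add p k γ
  funext x
  have h₁ := congrFun hu x
  have h₂ := congrFun h x
  simp only [Pi.add_apply] at h₁ h₂ ⊢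
  omega

end Tuples

section Exchange

variable {n : ℕ} {ι : Type*} {Bj : ι → Finset (Fin n → ℕ)} {dg : ι → ℕ}

open Relation

def ExchangeStep (p q : (k : ι) → Bj k) (T : Finset ι) (α β : Fin n) : Prop :=
  ∃ k ∈ T, (q k).1 α < (p k).1 α ∧ (p k).1 β < (q k).1 β

lemma exchangeStep_swap {p q : (k : ι) → Bj k} {T : Finset ι} {α β : Fin n} :
    ExchangeStep q p T β α ↔ ExchangeStep p q T α β := by
  constructor <;> exact fun ⟨k, hk, h₁, h₂⟩ => ⟨k, hk, h₂, h₁⟩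

variable [DecidableEq ι]

/-- A path using column `k` can be shortcut to start at its last step in column `k`. -/
lemma reflTransGen_exchangeStep_erase {p q : (k : ι) → Bj k} {T : Finset ι} {β m : Fin n}
    (k : ι) (h : ReflTransGen (ExchangeStep p q T) β m) :
    ReflTransGen (ExchangeStep p q (T.erase k)) β m ∨
      ∃ δ, (p k).1 δ < (q k).1 δ ∧ ReflTransGen (ExchangeStep p q (T.erase k)) δ m := by
  induction h using ReflTransGen.head_induction_on with
  | refl => exact Or.inl ReflTransGen.refl
  | head hstep _ ih =>
    obtain ⟨k', hk'T, hsrc, htgt⟩ := hstep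
    rcases ih with ih | ih
    · by_cases hk : k' = k
      · subst hk
        exact Or.inr ⟨_, htgt, ih⟩
      · exact Or.inl (ReflTransGen.head ⟨k', Finset.mem_erase.2 ⟨hk, hk'T⟩, hsrc, htgt⟩ ih)
    · exact Or.inr ih

variable [Fintype ι]

lemma exists_tot_add_eVec_of_reflTransGen (hBj : ∀ k, IsSEP (Bj k) (dg k))
    (p q : (k : ι) → Bj k) (T : Finset ι) {α m : Fin n}
    (h : ReflTransGen (ExchangeStep p q T) α m) :
    ∃ t : (k : ι) → Bj k, (∀ k ∉ T, t k = p k) ∧ tot Bj t + eVec α = tot Bj p + eVec m := by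
  induction T using Finset.strongInduction generalizing α with
  | H T ih =>
  rcases h.cases_head with rfl | ⟨β, ⟨k, hkT, hαk, hβk⟩, hβm⟩
  · exact ⟨p, fun _ _ => rfl, rfl⟩
  obtain ⟨δ, hδk, hδm⟩ : ∃ δ, (p k).1 δ < (q k).1 δ ∧
      ReflTransGen (ExchangeStep p q (T.erase k)) δ m :=
    (reflTransGen_exchangeStep_erase k hβm).elim (fun h => ⟨β, hβk, h⟩) id
  obtain ⟨t, htT, ht⟩ := ih _ (Finset.erase_ssubset hkT) hδm
  obtain ⟨γ, hγB, hγ⟩ := (hBj k).exchange (p k).2 (q k).2 hαk hδk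
  have htk : t k = p k := htT k (Finset.notMem_erase k T)
  refine ⟨Function.update t k ⟨γ, hγB⟩, fun k' hk' => ?_, ?_⟩
  · rw [Function.update_of_ne (ne_of_mem_of_not_mem hkT hk').symm]
    exact htT k' fun h => hk' (Finset.mem_of_mem_erase h)
  · rw [tot_update_add_eVec (by rw [htk]; exact hγ), ht]

/-- The symmetric exchange property of the Minkowski sum `B_1 + ⋯ + B_s`, with witnesses. -/
theorem exists_exchange_of_tot_lt (hBj : ∀ k, IsSEP (Bj k) (dg k)) {p q : (k : ι) → Bj k}
    {j : Fin n} (h : tot Bj q j < tot Bj p j) :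
    ∃ m, tot Bj p m < tot Bj q m ∧ ∃ t u : (k : ι) → Bj k,
      tot Bj t + eVec j = tot Bj p + eVec m ∧ tot Bj u + eVec m = tot Bj q + eVec j := by
  classical
  set S := Finset.univ.filter (ReflTransGen (ExchangeStep p q Finset.univ) j)
  have hjS : j ∈ S := Finset.mem_filter.2 ⟨Finset.mem_univ j, ReflTransGen.refl⟩
  -- `S` is closed under exchange steps, so no column has a net excess of `p` over `q` on `S`
  have hS : ∑ x ∈ S, tot Bj p x ≤ ∑ x ∈ S, tot Bj q x := by
    simp only [tot, Finset.sum_apply]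
    rw [Finset.sum_comm, Finset.sum_comm (s := S)]
    refine Finset.sum_le_sum fun k _ => Finset.sum_le_sum_of_sum_eq_of_closed S
      (((hBj k).2.1 _ (p k).2).trans ((hBj k).2.1 _ (q k).2).symm) fun a ha hqa b hpb => ?_
    exact Finset.mem_filter.2 ⟨Finset.mem_univ b,
      (Finset.mem_filter.1 ha).2.tail ⟨k, Finset.mem_univ k, hqa, hpb⟩⟩
  obtain ⟨m, hmS, hm⟩ : ∃ m ∈ S, tot Bj p m < tot Bj q m := by
    by_contra! hle
    exact hS.not_gt (Finset.sum_lt_sum hle ⟨j, hjS, h⟩)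
  have hjm := (Finset.mem_filter.1 hmS).2
  obtain ⟨t, -, ht⟩ := exists_tot_add_eVec_of_reflTransGen hBj p q Finset.univ hjm
  obtain ⟨u, -, hu⟩ := exists_tot_add_eVec_of_reflTransGen hBj q p Finset.univ
    (ReflTransGen.mono (fun _ _ => exchangeStep_swap.2) _ _ (reflTransGen_swap.2 hjm))
  exact ⟨m, hm, t, u, ht, hu⟩

end Exchange

section IdealE

variable {n : ℕ} {ι : Type*} [Fintype ι] {Bj : ι → Finset (Fin n → ℕ)} {dg : ι → ℕ}
  {K : Type*} [Field K]

lemma X_mul_X_sub_X_mul_X_mem_idealE {r s t u : (k : ι) → Bj k} {i₁ i₂ : Fin n}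
    (h₁ : tot Bj s i₁ < tot Bj r i₁) (h₂ : tot Bj r i₂ < tot Bj s i₂)
    (h₃ : tot Bj t + eVec i₁ = tot Bj r + eVec i₂)
    (h₄ : tot Bj u + eVec i₂ = tot Bj s + eVec i₁) :
    X r * X s - X t * X u ∈ idealE Bj K :=
  Ideal.subset_span ⟨r, s, t, u, i₁, i₂, h₁, h₂, h₃, h₄, rfl⟩

lemma X_mul_X_sub_X_mul_X_mem_idealE_of_transfer_of_lt [DecidableEq ι]
    (hBj : ∀ k, IsSEP (Bj k) (dg k)) {p q p' q' : (k : ι) → Bj k} {i j : Fin n} (hij : i ≠ j)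
    (hp : tot Bj p' + eVec j = tot Bj p + eVec i) (hq : tot Bj q' + eVec i = tot Bj q + eVec j)
    (hj : tot Bj q j < tot Bj p j) :
    X p * X q - X p' * X q' ∈ idealE Bj K := by
  by_cases hi : tot Bj p i < tot Bj q i
  · exact X_mul_X_sub_X_mul_X_mem_idealE hj hi hp hq
  -- otherwise both pairs are symmetric-exchange related to a common third pair
  obtain ⟨m, hm, t, u, ht, hu⟩ := exists_exchange_of_tot_lt hBj hj
  obtain ⟨hp'i, -, hp'⟩ := apply_of_add_eVec_eq hij hp
  obtain ⟨-, hq'i, hq'⟩ := apply_of_add_eVec_eq hij.symm hq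
  have hmi : m ≠ i := by rintro rfl; omega
  have hmj : m ≠ j := by rintro rfl; omega
  have htp' : tot Bj t + eVec i = tot Bj p' + eVec m := by
    funext x
    have h₁ := congrFun ht x
    have h₂ := congrFun hp x
    simp only [Pi.add_apply] at h₁ h₂ ⊢
    omega
  have hpq := X_mul_X_sub_X_mul_X_mem_idealE (K := K) hj hm ht hu
  have hpq' := X_mul_X_sub_X_mul_X_mem_idealE (K := K) (i₁ := i) (by omega)
    (by rw [hp' m hmi hmj, hq' m hmj hmi]; exact hm) htp' (hu.trans hq.symm)
  simpa only [sub_sub_sub_cancel_right] using sub_mem hpq hpq'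

theorem X_mul_X_sub_X_mul_X_mem_idealE_of_transfer [DecidableEq ι]
    (hBj : ∀ k, IsSEP (Bj k) (dg k)) {p q p' q' : (k : ι) → Bj k} {i j : Fin n} (hij : i ≠ j)
    (hp : tot Bj p' + eVec j = tot Bj p + eVec i) (hq : tot Bj q' + eVec i = tot Bj q + eVec j) :
    X p * X q - X p' * X q' ∈ idealE Bj K := by
  obtain ⟨hp'i, -, -⟩ := apply_of_add_eVec_eq hij hp
  obtain ⟨-, hq'i, -⟩ := apply_of_add_eVec_eq hij.symm hq
  rcases lt_or_ge (tot Bj q j) (tot Bj p j) with hj | hj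
  · exact X_mul_X_sub_X_mul_X_mem_idealE_of_transfer_of_lt hBj hij hp hq hj
  rcases lt_or_ge (tot Bj p i) (tot Bj q i) with hi | hi
  · rw [mul_comm (X p), mul_comm (X p')]
    exact X_mul_X_sub_X_mul_X_mem_idealE_of_transfer_of_lt hBj hij.symm hq hp hi
  · rw [← neg_sub]
    exact neg_mem <| X_mul_X_sub_X_mul_X_mem_idealE_of_transfer_of_lt hBj hij.symm
      hp.symm hq.symm (by omega)

lemma X_mul_X_sub_X_update_mul_X_update_mem_idealE [DecidableEq ι]
    (hBj : ∀ k, IsSEP (Bj k) (dg k)) {c : ι} (a b : Bj c) (p q : (k : ι) → Bj k)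
    (hsum : (p c).1 + (q c).1 = b.1 + a.1) :
    X p * X q - X (Function.update p c b) * X (Function.update q c a) ∈ idealE Bj K := by
  induction hN : ∑ x, Nat.dist ((p c).1 x) (b.1 x) using Nat.strong_induction_on
    generalizing p q with
  | _ N ih =>
  by_cases hb : p c = b
  · have ha : q c = a := Subtype.ext (add_left_cancel (hb ▸ hsum))
    rw [← hb, ← ha, Function.update_eq_self, Function.update_eq_self, sub_self]
    exact zero_mem _
  have hne : (p c).1 ≠ b.1 := fun h => hb (Subtype.ext h)
  obtain ⟨i, hi⟩ := (hBj c).exists_lt_of_ne (p c).2 b.2 hne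
  obtain ⟨j, hj⟩ := (hBj c).exists_lt_of_ne b.2 (p c).2 hne.symm
  have hij : i ≠ j := by rintro rfl; omega
  have hs := congrFun hsum
  simp only [Pi.add_apply] at hs
  obtain ⟨ξ, hξB, hξ⟩ := (hBj c).exchange (p c).2 b.2 hj hi
  obtain ⟨η, hηB, hη⟩ := (hBj c).exchange (q c).2 a.2 (i := i) (j := j)
    (by have := hs i; omega) (by have := hs j; omega)
  have hstep := X_mul_X_sub_X_mul_X_mem_idealE_of_transfer (K := K) hBj hij
    (tot_update_add_eVec (p := p) (γ := ⟨ξ, hξB⟩) hξ)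
    (tot_update_add_eVec (p := q) (γ := ⟨η, hηB⟩) hη)
  have hsum' : ξ + η = b.1 + a.1 := by
    funext x
    have h₁ := congrFun hξ x
    have h₂ := congrFun hη x
    simp only [Pi.add_apply] at h₁ h₂ ⊢
    have := hs x
    omega
  have hrest := ih _ (hN ▸ sum_dist_lt_of_add_eVec_eq hξ hi hj) (Function.update p c ⟨ξ, hξB⟩) (Function.update q c ⟨η, hηB⟩)
    (by simpa only [Function.update_self] using hsum') (by simp only [Function.update_self])
  simp only [Function.update_idem] at hrest
  simpa only [sub_add_sub_cancel] using add_mem hstep hrest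

theorem X_mul_X_sub_X_mul_X_swap_mem_idealE [DecidableEq ι] (hBj : ∀ k, IsSEP (Bj k) (dg k))
    (c : ι) (p q : (k : ι) → Bj k) :
    X p * X q - X (Function.update p c (q c)) * X (Function.update q c (p c)) ∈ idealE Bj K :=
  X_mul_X_sub_X_update_mul_X_update_mem_idealE hBj (p c) (q c) p q (add_comm _ _)

end IdealE

lemma Ideal.prod_sub_prod_mem_of_mul_sub_mul_mem {R D : Type*} [CommRing R] [Fintype D]
    [DecidableEq D] {I : Ideal R} {f g : D → R} {x y : D} (hxy : x ≠ y)
    (hfg : ∀ i, i ≠ x → i ≠ y → f i = g i) (h : f x * f y - g x * g y ∈ I) :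
    ∏ i, f i - ∏ i, g i ∈ I := by
  have hy : y ∈ Finset.univ.erase x := Finset.mem_erase.2 ⟨hxy.symm, Finset.mem_univ y⟩
  rw [← Finset.mul_prod_erase _ f (Finset.mem_univ x), ← Finset.mul_prod_erase _ f hy,
    ← Finset.mul_prod_erase _ g (Finset.mem_univ x), ← Finset.mul_prod_erase _ g hy,
    Finset.prod_congr rfl fun i hi => hfg i (Finset.ne_of_mem_erase (Finset.mem_of_mem_erase hi))
      (Finset.ne_of_mem_erase hi)]
  convert I.mul_mem_right (∏ i ∈ (Finset.univ.erase x).erase y, g i) h using 1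
  ring

section Permutations

variable {n : ℕ} {ι : Type*} [Fintype ι] {Bj : ι → Finset (Fin n → ℕ)} {dg : ι → ℕ}
  {K : Type*} [Field K] {D : Type*} [Fintype D]

lemma prod_X_sub_prod_X_update_swap_mem_idealE [DecidableEq ι] [DecidableEq D]
    (hBj : ∀ k, IsSEP (Bj k) (dg k)) (w : D → (k : ι) → Bj k) (c : ι) {x y : D} (hxy : x ≠ y) :
    ∏ i, X (w i) - ∏ i, X (Function.update (w i) c (w (Equiv.swap x y i) c)) ∈ idealE Bj K := by
  refine Ideal.prod_sub_prod_mem_of_mul_sub_mul_mem hxy (fun i hix hiy => ?_) ?_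
  · rw [Equiv.swap_apply_of_ne_of_ne hix hiy, Function.update_eq_self]
  · rw [Equiv.swap_apply_left, Equiv.swap_apply_right]
    exact X_mul_X_sub_X_mul_X_swap_mem_idealE hBj c (w x) (w y)

theorem prod_X_sub_prod_X_update_perm_mem_idealE [DecidableEq ι] [DecidableEq D]
    (hBj : ∀ k, IsSEP (Bj k) (dg k)) (w : D → (k : ι) → Bj k) (c : ι) (σ : Equiv.Perm D) :
    ∏ i, X (w i) - ∏ i, X (Function.update (w i) c (w (σ i) c)) ∈ idealE Bj K := by
  refine Equiv.Perm.swap_induction_on' σ ?_ fun τ x y hxy ih => ?_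
  · simp only [Equiv.Perm.one_apply, Function.update_eq_self, sub_self, zero_mem]
  · have h := prod_X_sub_prod_X_update_swap_mem_idealE (K := K) hBj
      (fun i => Function.update (w i) c (w (τ i) c)) c hxy
    simp only [Function.update_self, Function.update_idem] at h
    simpa only [Equiv.Perm.mul_apply, sub_add_sub_cancel] using add_mem ih h

lemma phiT_prod_X (w : D → (k : ι) → Bj k) :
    phiT Bj K (∏ i, X (w i)) = ∏ x, X x ^ (∑ i, tot Bj (w i)) x := by
  simp only [map_prod, phiT, aeval_X, Finset.sum_apply]
  rw [Finset.prod_comm]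
  exact Finset.prod_congr rfl fun x _ => Finset.prod_pow_eq_pow_sum _ _ _

lemma sum_tot_eq_of_perm_column (v v' : D → (k : ι) → Bj k) (c : ι) (σ : Equiv.Perm D)
    (hcol : ∀ i, v' i c = v (σ i) c) (hother : ∀ i, ∀ k, k ≠ c → v' i k = v i k) :
    ∑ i, tot Bj (v' i) = ∑ i, tot Bj (v i) := by
  simp only [tot]
  rw [Finset.sum_comm, Finset.sum_comm (f := fun i k => ((v i k : Bj k) : Fin n → ℕ))]
  refine Finset.sum_congr rfl fun k _ => ?_
  rcases eq_or_ne k c with rfl | hk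
  · simp only [hcol]
    exact Equiv.sum_comp σ fun i => ((v i k : Bj k) : Fin n → ℕ)
  · simp only [hother _ k hk]

theorem prod_X_sub_prod_X_mem_idealP {d : ℕ} (v v' : Fin d → (k : ι) → Bj k) (c : ι)
    (σ : Equiv.Perm (Fin d)) (hcol : ∀ i, v' i c = v (σ i) c)
    (hother : ∀ i, ∀ k, k ≠ c → v' i k = v i k) :
    ∏ i, X (v i) - ∏ i, X (v' i) ∈ idealP Bj K := by
  rcases Nat.eq_zero_or_pos d with rfl | hd
  · simp
  refine Ideal.subset_span ⟨d, hd, v, v', rfl, ?_, c, fun i k hk => (hother i k hk).symm⟩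
  rw [RingHom.mem_ker, map_sub, phiT_prod_X, phiT_prod_X,
    sum_tot_eq_of_perm_column v v' c σ hcol hother, sub_self]

end Permutations

/-- **Rearrangement lemma.** If `F' = y_{v'_1}⋯y_{v'_d}` is obtained from
`F = y_{v_1}⋯y_{v_d}` by permuting the entries of one column `c` by a permutation `σ`,
then `F − F' ∈ E ∩ P`. -/
theorem rearrange_column {n s : ℕ} (dg : Fin s → ℕ)
    (Bj : Fin s → Finset (Fin n → ℕ)) (hBj : ∀ j, IsSEP (Bj j) (dg j))
    (K : Type*) [Field K] (d : ℕ)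
    (v v' : Fin d → ((j : Fin s) → ↥(Bj j))) (c : Fin s) (σ : Equiv.Perm (Fin d))
    (hcol : ∀ i : Fin d, v' i c = v (σ i) c)
    (hother : ∀ i : Fin d, ∀ k : Fin s, k ≠ c → v' i k = v i k) :
    (∏ i, X (v i)) - (∏ i, X (v' i)) ∈ idealE Bj K ⊓ idealP Bj K := by
  have hv' : v' = fun i => Function.update (v i) c (v (σ i) c) := by
    funext i k
    rcases eq_or_ne k c with rfl | hk
    · rw [Function.update_self, hcol]
    · rw [Function.update_of_ne hk, hother i k hk]
  refine ⟨?_, prod_X_sub_prod_X_mem_idealP v v' c σ hcol hother⟩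
  rw [hv']
  exact prod_X_sub_prod_X_update_perm_mem_idealE hBj v c σ
end
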